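/- arXiv:2211.05670 — 3 statements merged into one kernel-verified Lean document; each statement's English description precedes it below -/
import Mathlib

section
/- Let d ≥ 1, c ≥ 1, γ > 0, and let λ : ℤ^d → ℝ satisfy λ_{n+k} ≠ λ_n for all n ∈ ℤ^d and k ≠ 0 together with conditions (A1)–(A3). Let v : ℤ^d → ℂ satisfy ‖v‖_T ≤ 1/(4c), and set λ̃_n := λ_n + v_n. Then for every k ∈ ℤ^d with k ≠ 0 one has λ̃_{n+k} ≠ λ̃_n for all n, and sup_{n ∈ ℤ^d} 1/|λ̃_{n+k} − λ̃_n| + sup_{n ∈ ℤ^d, j ≠ 0} (1/|λ_j − λ_0|) · |1/(λ̃_{n+j+k} − λ̃_{n+j}) − 1/(λ̃_{n+k} − λ̃_n)| ≤ 12 c² |k|^{2γ}. -/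
open scoped ENNReal

noncomputable section

abbrev Zd (d : ℕ) := Fin d → ℤ

/-- `|k| = |k₁| + ⋯ + |k_d|` as a real number. -/
def absZ {d : ℕ} (k : Zd d) : ℝ := ∑ i, |(k i : ℝ)|

/-- The T-norm of a sequence `a : ℤ^d → ℂ` relative to the base sequence `lam`:
`‖a‖_T = sup_n |a_n| + sup_{n, j ≠ 0} |a_{n+j} - a_n| / |λ_j - λ_0|`. -/
def Tnorm {d : ℕ} (lam : Zd d → ℝ) (a : Zd d → ℂ) : ℝ≥0∞ :=
  (⨆ n : Zd d, ENNReal.ofReal ‖a n‖) +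
    ⨆ n : Zd d, ⨆ j : {j : Zd d // j ≠ 0},
      ENNReal.ofReal (‖a (n + j.1) - a n‖ / |lam j.1 - lam 0|)

/-! Write the perturbed gap as `λ̃_{n+k} − λ̃_n = δ_n + w_n` with `δ_n = λ_{n+k} − λ_n` and
`w_n = v_{n+k} − v_n`. Interpolating the sup part and the Lipschitz part of `‖v‖_T ≤ 1/(4c)`
against (A2) gives `|w_n| ≤ |δ_n| / 2`, so by (A1) the perturbed gaps stay above
`1 / (2ca)` with `a = |k|^γ ≥ 1`. For the Lipschitz part of the new T-norm,
`1/D' − 1/D = ((δ − δ') + (w − w')) / (D D')`: the term `δ − δ'` is controlled by (A3), where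
(A1) at `n = 0` bounds `1/|λ_k − λ_0|` by `ca`, and `w − w'` is a second difference of `v`,
controlled by the Lipschitz part of `‖v‖_T`. Altogether
`‖1/D‖_T ≤ 2ca + 4c(1 + ca) + 2ca² ≤ 12c²a²`. -/

theorem one_le_absZ {d : ℕ} {k : Zd d} (hk : k ≠ 0) : 1 ≤ absZ k := by
  obtain ⟨i, hi⟩ := Function.ne_iff.mp hk
  calc (1 : ℝ) ≤ |(k i : ℝ)| := by exact_mod_cast Int.one_le_abs hi
    _ ≤ absZ k :=
      Finset.single_le_sum (f := fun i => |(k i : ℝ)|) (fun _ _ => abs_nonneg _)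
        (Finset.mem_univ i)

section Tnorm

variable {d : ℕ} (lam : Zd d → ℝ) {a : Zd d → ℂ}

theorem Tnorm_le_ofReal {A B : ℝ} (hA : ∀ n, ‖a n‖ ≤ A) (hB : 0 ≤ B)
    (hlip : ∀ n j, j ≠ 0 → ‖a (n + j) - a n‖ ≤ B * |lam j - lam 0|) :
    Tnorm lam a ≤ ENNReal.ofReal (A + B) := by
  rw [Tnorm, ENNReal.ofReal_add ((norm_nonneg _).trans (hA 0)) hB]
  gcongr
  · exact iSup_le fun n => ENNReal.ofReal_le_ofReal (hA n)
  · exact iSup_le fun n => iSup_le fun j =>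
      ENNReal.ofReal_le_ofReal (div_le_of_le_mul₀ (abs_nonneg _) hB (hlip n j j.2))

variable {M : ℝ}

theorem norm_add_norm_sub_div_le_of_Tnorm_le (h : Tnorm lam a ≤ ENNReal.ofReal M) (hM : 0 ≤ M)
    (n m : Zd d) {j : Zd d} (hj : j ≠ 0) :
    ‖a n‖ + ‖a (m + j) - a m‖ / |lam j - lam 0| ≤ M := by
  rw [← ENNReal.ofReal_le_ofReal_iff hM, ENNReal.ofReal_add (norm_nonneg _) (by positivity)]
  refine le_trans (add_le_add ?_ ?_) h
  · exact le_iSup (fun n => ENNReal.ofReal ‖a n‖) n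
  · exact le_iSup_of_le m (le_iSup_of_le ⟨j, hj⟩ le_rfl)

theorem norm_sub_le_of_Tnorm_le (h : Tnorm lam a ≤ ENNReal.ofReal M) (hM : 0 ≤ M)
    (m : Zd d) {j : Zd d} (hj : lam j ≠ lam 0) :
    ‖a (m + j) - a m‖ ≤ M * |lam j - lam 0| := by
  have hj0 : j ≠ 0 := by rintro rfl; exact hj rfl
  have := norm_add_norm_sub_div_le_of_Tnorm_le lam h hM m m hj0
  rw [← div_le_iff₀ (abs_pos.mpr (sub_ne_zero.mpr hj))]
  linarith [norm_nonneg (a m)]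

/-- Half the difference is bounded by the sup part of the T-norm, its quotient by
`|λ_k − λ_0|` by the Lipschitz part, and the two parts add up to at most `M`. -/
theorem norm_sub_mul_le_of_Tnorm_le (h : Tnorm lam a ≤ ENNReal.ofReal M) (hM : 0 ≤ M)
    (n : Zd d) {k : Zd d} (hk : lam k ≠ lam 0) :
    ‖a (n + k) - a n‖ * (1 / 2 + 1 / |lam k - lam 0|) ≤ M := by
  have hk0 : k ≠ 0 := by rintro rfl; exact hk rfl
  have h₁ := norm_add_norm_sub_div_le_of_Tnorm_le lam h hM n n hk0
  have h₂ := norm_add_norm_sub_div_le_of_Tnorm_le lam h hM (n + k) n hk0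
  have := norm_sub_le (a (n + k)) (a n)
  rw [mul_add, mul_one_div, mul_one_div]
  linarith

theorem norm_second_diff_le_of_Tnorm_le (h : Tnorm lam a ≤ ENNReal.ofReal M) (hM : 0 ≤ M)
    (n k : Zd d) {j : Zd d} (hj : lam j ≠ lam 0) :
    ‖(a (n + k) - a n) - (a (n + j + k) - a (n + j))‖ ≤ 2 * M * |lam j - lam 0| := by
  have h₁ := norm_sub_le_of_Tnorm_le lam h hM n hj
  have h₂ := norm_sub_le_of_Tnorm_le lam h hM (n + k) hj
  calc _ = ‖(a (n + j) - a n) - (a (n + k + j) - a (n + k))‖ := by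
        rw [add_right_comm]; congr 1; ring
    _ ≤ ‖a (n + j) - a n‖ + ‖a (n + k + j) - a (n + k)‖ := norm_sub_le _ _
    _ ≤ 2 * M * |lam j - lam 0| := by linarith

end Tnorm

section ReciprocalPerturbation

variable {x x' : ℝ} {w w' : ℂ}

theorem half_abs_le_norm_ofReal_add (hw : ‖w‖ ≤ |x| / 2) : |x| / 2 ≤ ‖(x : ℂ) + w‖ := by
  have := norm_sub_le ((x : ℂ) + w) w
  rw [add_sub_cancel_right, Complex.norm_real, Real.norm_eq_abs] at this
  linarith

theorem ofReal_add_ne_zero (hx : x ≠ 0) (hw : ‖w‖ ≤ |x| / 2) : (x : ℂ) + w ≠ 0 := by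
  rw [← norm_pos_iff]
  exact lt_of_lt_of_le (by positivity) (half_abs_le_norm_ofReal_add hw)

theorem norm_inv_ofReal_add_le (hx : x ≠ 0) (hw : ‖w‖ ≤ |x| / 2) :
    ‖((x : ℂ) + w)⁻¹‖ ≤ 2 / |x| := by
  rw [norm_inv, ← inv_div]
  exact inv_anti₀ (by positivity) (half_abs_le_norm_ofReal_add hw)

theorem norm_inv_ofReal_add_sub_inv_le {K : ℝ} (hx : x ≠ 0) (hx' : x' ≠ 0)
    (hw : ‖w‖ ≤ |x| / 2) (hw' : ‖w'‖ ≤ |x'| / 2) (hK : 1 / |x| ≤ K) (hK' : 1 / |x'| ≤ K) :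
    ‖((x' : ℂ) + w')⁻¹ - ((x : ℂ) + w)⁻¹‖ ≤ 4 * |1 / x' - 1 / x| + 4 * K ^ 2 * ‖w - w'‖ := by
  set P := ((x : ℂ) + w)⁻¹ * ((x' : ℂ) + w')⁻¹
  have hsplit : ((x' : ℂ) + w')⁻¹ - ((x : ℂ) + w)⁻¹ = ((x - x' : ℝ) : ℂ) * P + (w - w') * P := by
    have := ofReal_add_ne_zero hx hw
    have := ofReal_add_ne_zero hx' hw'
    simp only [P]
    field_simp
    push_cast
    ring
  have hP : ‖P‖ ≤ 2 / |x| * (2 / |x'|) := by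
    rw [norm_mul]
    gcongr
    exacts [norm_inv_ofReal_add_le hx hw, norm_inv_ofReal_add_le hx' hw']
  have hreal : |x - x'| * (2 / |x| * (2 / |x'|)) = 4 * |1 / x' - 1 / x| := by
    have : 1 / x' - 1 / x = (x - x') / (x' * x) := by field_simp
    rw [this, abs_div, abs_mul]
    field_simp
    ring
  calc _ ≤ |x - x'| * ‖P‖ + ‖w - w'‖ * ‖P‖ := by
        rw [hsplit]
        refine (norm_add_le _ _).trans ?_
        rw [norm_mul (((x - x' : ℝ) : ℂ)) P, norm_mul (w - w') P, Complex.norm_real,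
          Real.norm_eq_abs]
    _ ≤ |x - x'| * (2 / |x| * (2 / |x'|)) + ‖w - w'‖ * (2 * K * (2 * K)) := by
        have hK0 : 0 ≤ K := (by positivity : (0 : ℝ) ≤ 1 / |x|).trans hK
        gcongr
        refine hP.trans ?_
        rw [div_eq_mul_one_div 2 |x|, div_eq_mul_one_div 2 |x'|]
        gcongr
    _ = _ := by rw [hreal]; ring

theorem Tnorm_inv_ofReal_add_le {d : ℕ} (lam : Zd d → ℝ) {δ : Zd d → ℝ} {w : Zd d → ℂ}
    {K C E : ℝ} (hδ : ∀ n, δ n ≠ 0) (hw : ∀ n, ‖w n‖ ≤ |δ n| / 2) (hK : ∀ n, 1 / |δ n| ≤ K)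
    (hC : 0 ≤ C) (hδlip : ∀ n j, j ≠ 0 → |1 / δ (n + j) - 1 / δ n| ≤ C * |lam j - lam 0|)
    (hE : 0 ≤ E) (hwlip : ∀ n j, j ≠ 0 → ‖w n - w (n + j)‖ ≤ E * |lam j - lam 0|) :
    Tnorm lam (fun n => ((δ n : ℂ) + w n)⁻¹) ≤ ENNReal.ofReal (2 * K + (4 * C + 4 * K ^ 2 * E)) := by
  have hK0 : 0 ≤ K := (by positivity : (0 : ℝ) ≤ 1 / |δ 0|).trans (hK 0)
  refine Tnorm_le_ofReal lam (fun n => ?_) (by positivity) (fun n j hj => ?_)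
  · refine (norm_inv_ofReal_add_le (hδ n) (hw n)).trans ?_
    rw [div_eq_mul_one_div]
    gcongr
    exact hK n
  · calc _ ≤ 4 * |1 / δ (n + j) - 1 / δ n| + 4 * K ^ 2 * ‖w n - w (n + j)‖ :=
          norm_inv_ofReal_add_sub_inv_le (hδ n) (hδ (n + j)) (hw n) (hw (n + j)) (hK n) (hK (n + j))
      _ ≤ 4 * (C * |lam j - lam 0|) + 4 * K ^ 2 * (E * |lam j - lam 0|) := by
          gcongr
          exacts [hδlip n j hj, hwlip n j hj]
      _ = _ := by ring

end ReciprocalPerturbation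

theorem abs_le_abs_mul_of_abs_one_div_mul_le {y t C : ℝ} (hy : y ≠ 0) (h : |1 / y * t| ≤ C) :
    |t| ≤ |y| * C := by
  rwa [abs_mul, abs_one_div, one_div_mul_eq_div, div_le_iff₀ (abs_pos.mpr hy), mul_comm] at h

theorem norm_sub_le_half_of_Tnorm_le {d : ℕ} {c : ℝ} {lam : Zd d → ℝ} {v : Zd d → ℂ}
    (hc : 0 < c) (hv : Tnorm lam v ≤ ENNReal.ofReal (1 / (4 * c))) {n k : Zd d}
    (hk : lam k ≠ lam 0) (hn : lam (n + k) ≠ lam n)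
    (hA2 : 1 / |lam (n + k) - lam n| ≤ c * (1 + 1 / |lam k - lam 0|)) :
    ‖v (n + k) - v n‖ ≤ |lam (n + k) - lam n| / 2 := by
  set V := ‖v (n + k) - v n‖
  set S := |lam (n + k) - lam n|
  set L := |lam k - lam 0|
  have hS : 0 < S := abs_pos.mpr (sub_ne_zero.mpr hn)
  have hL : 0 < L := abs_pos.mpr (sub_ne_zero.mpr hk)
  have hV : V * (1 / 2 + 1 / L) ≤ 1 / (4 * c) :=
    norm_sub_mul_le_of_Tnorm_le lam hv (by positivity) n hk
  have hSA2 : 1 ≤ c * (1 + 1 / L) * S := (div_le_iff₀ hS).mp hA2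
  calc V ≤ V * (c * (1 + 1 / L) * S) := le_mul_of_one_le_right (norm_nonneg _) hSA2
    _ ≤ V * (c * (1 + 2 / L) * S) := by gcongr; linarith
    _ = 2 * c * S * (V * (1 / 2 + 1 / L)) := by ring
    _ ≤ 2 * c * S * (1 / (4 * c)) := by gcongr
    _ = S / 2 := by field_simp; ring

theorem perturbation_constant_le {c a : ℝ} (hc : 1 ≤ c) (ha : 1 ≤ a) :
    2 * (c * a) + (4 * (c * (1 + c * a)) + 4 * (c * a) ^ 2 * (1 / (2 * c))) ≤
      12 * c ^ 2 * a ^ 2 := by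
  have hc_le : c ≤ c * a := le_mul_of_one_le_right (by linarith) ha
  have ha_le : a ≤ c * a := le_mul_of_one_le_left (by linarith) hc
  have hca : 1 ≤ c * a := hc.trans hc_le
  have : 4 * (c * a) ^ 2 * (1 / (2 * c)) = 2 * c * a ^ 2 := by field_simp; ring
  nlinarith

theorem stability_of_small_denominators_general
    (d : ℕ) (c γ : ℝ) (hc : 1 ≤ c) (hγ : 0 < γ)
    (lam : Zd d → ℝ)
    (hne : ∀ (n k : Zd d), k ≠ 0 → lam (n + k) ≠ lam n)
    (hA1 : ∀ (n k : Zd d), k ≠ 0 → 1 / |lam (n + k) - lam n| ≤ c * absZ k ^ γ)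
    (hA2 : ∀ (n k : Zd d), k ≠ 0 →
      1 / |lam (n + k) - lam n| ≤ c * (1 + 1 / |lam k - lam 0|))
    (hA3 : ∀ (n j k : Zd d), j ≠ 0 → k ≠ 0 →
      |(1 / (lam j - lam 0)) *
        (1 / (lam (n + j + k) - lam (n + j)) - 1 / (lam (n + k) - lam n))| ≤
        c * (1 + 1 / |lam k - lam 0|))
    (v : Zd d → ℂ)
    (hv : Tnorm lam v ≤ ENNReal.ofReal (1 / (4 * c))) :
    ∀ k : Zd d, k ≠ 0 →
      (∀ n : Zd d, (lam (n + k) : ℂ) + v (n + k) ≠ (lam n : ℂ) + v n) ∧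
      Tnorm lam
          (fun n => (((lam (n + k) : ℂ) + v (n + k)) - ((lam n : ℂ) + v n))⁻¹) ≤
        ENNReal.ofReal (12 * c ^ 2 * absZ k ^ (2 * γ)) := by
  intro k hk
  have hc0 : 0 < c := by linarith
  have hL : ∀ {j}, j ≠ 0 → lam j ≠ lam 0 := fun hj => by simpa using hne 0 _ hj
  have habsZ : 1 ≤ absZ k := one_le_absZ hk
  have ha : 1 ≤ absZ k ^ γ := Real.one_le_rpow habsZ hγ.le
  have hLk : 1 / |lam k - lam 0| ≤ c * absZ k ^ γ := by simpa using hA1 0 k hk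
  have hw n : ‖v (n + k) - v n‖ ≤ |lam (n + k) - lam n| / 2 :=
    norm_sub_le_half_of_Tnorm_le hc0 hv (hL hk) (hne n k hk) (hA2 n k hk)
  have hgap n : (lam (n + k) : ℂ) + v (n + k) - (lam n + v n) =
      ((lam (n + k) - lam n : ℝ) : ℂ) + (v (n + k) - v n) := by push_cast; ring
  refine ⟨fun n => ?_, ?_⟩
  · rw [← sub_ne_zero, hgap]
    exact ofReal_add_ne_zero (sub_ne_zero.mpr (hne n k hk)) (hw n)
  simp_rw [hgap]
  refine (Tnorm_inv_ofReal_add_le lam (C := c * (1 + c * absZ k ^ γ)) (E := 1 / (2 * c))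
    (fun n => sub_ne_zero.mpr (hne n k hk)) hw (fun n => hA1 n k hk) (by positivity)
    (fun n j hj => ?_) (by positivity) (fun n j hj =>
      (norm_second_diff_le_of_Tnorm_le lam hv (by positivity) n k (hL hj)).trans_eq
        (by ring))).trans ?_
  · refine (abs_le_abs_mul_of_abs_one_div_mul_le (sub_ne_zero.mpr (hL hj))
      (hA3 n j k hj hk)).trans ?_
    rw [mul_comm]
    gcongr
  · rw [mul_comm 2 γ, Real.rpow_mul (zero_le_one.trans habsZ), Real.rpow_two]
    exact ENNReal.ofReal_le_ofReal (perturbation_constant_le hc ha)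

theorem stability_of_small_denominators
    (d : ℕ) (hd : 1 ≤ d) (c γ : ℝ) (hc : 1 ≤ c) (hγ : 0 < γ)
    (lam : Zd d → ℝ)
    (hne : ∀ (n k : Zd d), k ≠ 0 → lam (n + k) ≠ lam n)
    (hA1 : ∀ (n k : Zd d), k ≠ 0 → 1 / |lam (n + k) - lam n| ≤ c * absZ k ^ γ)
    (hA2 : ∀ (n k : Zd d), k ≠ 0 →
      1 / |lam (n + k) - lam n| ≤ c * (1 + 1 / |lam k - lam 0|))
    (hA3 : ∀ (n j k : Zd d), j ≠ 0 → k ≠ 0 →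
      |(1 / (lam j - lam 0)) *
        (1 / (lam (n + j + k) - lam (n + j)) - 1 / (lam (n + k) - lam n))| ≤
        c * (1 + 1 / |lam k - lam 0|))
    (v : Zd d → ℂ)
    (hv : Tnorm lam v ≤ ENNReal.ofReal (1 / (4 * c))) :
    ∀ k : Zd d, k ≠ 0 →
      (∀ n : Zd d, (lam (n + k) : ℂ) + v (n + k) ≠ (lam n : ℂ) + v n) ∧
      Tnorm lam
          (fun n => (((lam (n + k) : ℂ) + v (n + k)) - ((lam n : ℂ) + v n))⁻¹) ≤
        ENNReal.ofReal (12 * c ^ 2 * absZ k ^ (2 * γ)) :=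
  stability_of_small_denominators_general d c γ hc hγ lam hne hA1 hA2 hA3 v hv
end
end

section
/- Let d ≥ 1, c ≥ 1, γ > 0, let λ : ℤ^d → ℝ satisfy λ_j ≠ λ_0 for all j ≠ 0, and let λ̃ : ℤ^d → ℂ be such that λ̃_{n+k} ≠ λ̃_n for all n and all k ≠ 0, and such that for every k ≠ 0 the sequence (1/(λ̃_{n+k} − λ̃_n))_{n ∈ ℤ^d} has T-norm at most 12 c² |k|^{2γ}. Let α > 0, 0 < δ < α, and let B : ℤ^d × ℤ^d → ℂ be a matrix with ‖B‖_α < ∞. Define the matrix W by W_{m,m} := 1 and W_{m,m+k} := B_{m,m+k} / (λ̃_{m+k} − λ̃_m) for k ≠ 0 (W is the unique solution of the homological equation (λ̃_{m+k} − λ̃_m) W_{m,m+k} = B_{m,m+k}, k ≠ 0, whose diagonal equals that of the identity). Then ‖W − I‖_{α−δ} ≤ 12 c² (2γ/(e δ))^{2γ} ‖B‖_α, where I is the identity matrix. -/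
open scoped ENNReal

noncomputable section

/-- The α-norm of a matrix `A : ℤ^d × ℤ^d → ℂ`. -/
def matNorm {d : ℕ} (lam : Zd d → ℝ) (α : ℝ) (A : Zd d → Zd d → ℂ) : ℝ≥0∞ :=
  ⨆ k : Zd d, ENNReal.ofReal (Real.exp (α * absZ k)) * Tnorm lam (fun n => A n (n + k))

/-! The diagonals of `W - I` are `B_k · (λ̃_{·+k} - λ̃_·)⁻¹` for `k ≠ 0` and vanish for `k = 0`.
The T-norm is submultiplicative (a discrete Leibniz rule), so the small-divisor hypothesis gives
`‖(W - I)_k‖_T ≤ 12 c² |k|^{2γ} ‖B_k‖_T`. The polynomial loss `|k|^{2γ}` is then absorbed by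
shrinking the analyticity width from `α` to `α - δ`, since `x^p e^{-δx} ≤ (p / (e δ))^p`. -/

lemma rpow_mul_exp_neg_mul_le {p δ x : ℝ} (hp : 0 < p) (hδ : 0 < δ) (hx : 0 ≤ x) :
    x ^ p * Real.exp (-(δ * x)) ≤ (p / (Real.exp 1 * δ)) ^ p := by
  have hlin : x * (Real.exp 1 * δ / p) ≤ Real.exp (δ * x / p) := by
    have htangent := Real.add_one_le_exp (δ * x / p - 1)
    rw [Real.exp_sub, le_div_iff₀ (Real.exp_pos 1)] at htangent
    calc x * (Real.exp 1 * δ / p) = δ * x / p * Real.exp 1 := by ring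
      _ ≤ _ := by linarith
  have hpow : x ^ p * (Real.exp 1 * δ / p) ^ p ≤ Real.exp (δ * x) := by
    calc x ^ p * (Real.exp 1 * δ / p) ^ p = (x * (Real.exp 1 * δ / p)) ^ p :=
          (Real.mul_rpow hx (by positivity)).symm
      _ ≤ Real.exp (δ * x / p) ^ p := Real.rpow_le_rpow (by positivity) hlin hp.le
      _ = Real.exp (δ * x) := by rw [← Real.exp_mul, div_mul_cancel₀ _ hp.ne']
  have hinv : (p / (Real.exp 1 * δ)) ^ p = ((Real.exp 1 * δ / p) ^ p)⁻¹ := by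
    rw [← Real.inv_rpow (by positivity), inv_div]
  rw [hinv, Real.exp_neg, ← div_eq_mul_inv, div_le_iff₀ (Real.exp_pos _),
    le_inv_mul_iff₀ (by positivity)]
  linarith

lemma absZ_nonneg {d : ℕ} (k : Zd d) : 0 ≤ absZ k :=
  Finset.sum_nonneg fun _ _ => abs_nonneg _

lemma norm_mul_sub_mul_le {R : Type*} [SeminormedRing R] (a a' b b' : R) :
    ‖a' * b' - a * b‖ ≤ ‖a'‖ * ‖b' - b‖ + ‖a' - a‖ * ‖b‖ := by
  calc ‖a' * b' - a * b‖ = ‖a' * (b' - b) + (a' - a) * b‖ := by noncomm_ring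
    _ ≤ ‖a' * (b' - b)‖ + ‖(a' - a) * b‖ := norm_add_le _ _
    _ ≤ _ := add_le_add (norm_mul_le _ _) (norm_mul_le _ _)

section Tnorm

variable {d : ℕ} (lam : Zd d → ℝ)

def supNorm (a : Zd d → ℂ) : ℝ≥0∞ := ⨆ n, ENNReal.ofReal ‖a n‖

def lipNorm (a : Zd d → ℂ) : ℝ≥0∞ :=
  ⨆ n : Zd d, ⨆ j : {j : Zd d // j ≠ 0}, ENNReal.ofReal (‖a (n + j.1) - a n‖ / |lam j.1 - lam 0|)

lemma Tnorm_eq_supNorm_add_lipNorm (a : Zd d → ℂ) : Tnorm lam a = supNorm a + lipNorm lam a :=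
  rfl

variable {lam}

lemma ofReal_norm_le_supNorm (a : Zd d → ℂ) (n : Zd d) : ENNReal.ofReal ‖a n‖ ≤ supNorm a :=
  le_iSup (fun m => ENNReal.ofReal ‖a m‖) n

lemma ofReal_diffQuot_le_lipNorm (a : Zd d → ℂ) (n : Zd d) (j : {j : Zd d // j ≠ 0}) :
    ENNReal.ofReal (‖a (n + j.1) - a n‖ / |lam j.1 - lam 0|) ≤ lipNorm lam a :=
  le_iSup_of_le n <| le_iSup (fun i : {j : Zd d // j ≠ 0} =>
    ENNReal.ofReal (‖a (n + i.1) - a n‖ / |lam i.1 - lam 0|)) j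

lemma supNorm_mul_le (a b : Zd d → ℂ) : supNorm (fun n => a n * b n) ≤ supNorm a * supNorm b :=
  iSup_le fun n => by
    rw [norm_mul, ENNReal.ofReal_mul (norm_nonneg _)]
    exact mul_le_mul' (ofReal_norm_le_supNorm a n) (ofReal_norm_le_supNorm b n)

lemma lipNorm_mul_le (a b : Zd d → ℂ) :
    lipNorm lam (fun n => a n * b n) ≤ supNorm a * lipNorm lam b + lipNorm lam a * supNorm b := by
  refine iSup_le fun n => iSup_le fun j => ?_
  set r := |lam j.1 - lam 0|
  have hleibniz : ‖a (n + j.1) * b (n + j.1) - a n * b n‖ / r ≤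
      ‖a (n + j.1)‖ * (‖b (n + j.1) - b n‖ / r) + ‖a (n + j.1) - a n‖ / r * ‖b n‖ := by
    rw [mul_div_assoc', div_mul_eq_mul_div, ← add_div]
    exact div_le_div_of_nonneg_right (norm_mul_sub_mul_le _ _ _ _) (abs_nonneg _)
  refine (ENNReal.ofReal_le_ofReal hleibniz).trans ?_
  rw [ENNReal.ofReal_add (by positivity) (by positivity), ENNReal.ofReal_mul (norm_nonneg _),
    ENNReal.ofReal_mul (by positivity)]
  exact add_le_add
    (mul_le_mul' (ofReal_norm_le_supNorm a _) (ofReal_diffQuot_le_lipNorm b n j))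
    (mul_le_mul' (ofReal_diffQuot_le_lipNorm a n j) (ofReal_norm_le_supNorm b n))

lemma Tnorm_mul_le (a b : Zd d → ℂ) :
    Tnorm lam (fun n => a n * b n) ≤ Tnorm lam a * Tnorm lam b := by
  simp only [Tnorm_eq_supNorm_add_lipNorm]
  calc supNorm (fun n => a n * b n) + lipNorm lam (fun n => a n * b n)
      ≤ supNorm a * supNorm b + (supNorm a * lipNorm lam b + lipNorm lam a * supNorm b) :=
        add_le_add (supNorm_mul_le a b) (lipNorm_mul_le a b)
    _ ≤ supNorm a * supNorm b + (supNorm a * lipNorm lam b + lipNorm lam a * supNorm b) +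
          lipNorm lam a * lipNorm lam b := le_self_add
    _ = (supNorm a + lipNorm lam a) * (supNorm b + lipNorm lam b) := by ring

lemma Tnorm_zero : Tnorm lam (fun _ : Zd d => 0) = 0 := by
  simp [Tnorm]

end Tnorm

lemma matNorm_sub_le_of_Tnorm_diag_le {d : ℕ} {lam : Zd d → ℝ} {A B : Zd d → Zd d → ℂ}
    {M p δ : ℝ} (α : ℝ) (hM : 0 ≤ M) (hp : 0 < p) (hδ : 0 < δ)
    (hdiag : ∀ k, Tnorm lam (fun n => A n (n + k)) ≤
      ENNReal.ofReal (M * absZ k ^ p) * Tnorm lam (fun n => B n (n + k))) :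
    matNorm lam (α - δ) A ≤ ENNReal.ofReal (M * (p / (Real.exp 1 * δ)) ^ p) * matNorm lam α B := by
  refine iSup_le fun k => ?_
  have hweight : Real.exp ((α - δ) * absZ k) * (M * absZ k ^ p) =
      M * (absZ k ^ p * Real.exp (-(δ * absZ k))) * Real.exp (α * absZ k) := by
    rw [show (α - δ) * absZ k = -(δ * absZ k) + α * absZ k by ring, Real.exp_add]
    ring
  have hscalar : M * (absZ k ^ p * Real.exp (-(δ * absZ k))) ≤ M * (p / (Real.exp 1 * δ)) ^ p :=
    mul_le_mul_of_nonneg_left (rpow_mul_exp_neg_mul_le hp hδ (absZ_nonneg k)) hM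
  calc ENNReal.ofReal (Real.exp ((α - δ) * absZ k)) * Tnorm lam (fun n => A n (n + k))
      ≤ ENNReal.ofReal (Real.exp ((α - δ) * absZ k)) *
          (ENNReal.ofReal (M * absZ k ^ p) * Tnorm lam (fun n => B n (n + k))) :=
        mul_le_mul' le_rfl (hdiag k)
    _ = ENNReal.ofReal (M * (absZ k ^ p * Real.exp (-(δ * absZ k)))) *
          (ENNReal.ofReal (Real.exp (α * absZ k)) * Tnorm lam (fun n => B n (n + k))) := by
        rw [← mul_assoc, ← ENNReal.ofReal_mul (Real.exp_pos _).le, hweight,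
          ENNReal.ofReal_mul
            (mul_nonneg hM (mul_nonneg (Real.rpow_nonneg (absZ_nonneg k) p) (Real.exp_pos _).le)),
          mul_assoc]
    _ ≤ ENNReal.ofReal (M * (p / (Real.exp 1 * δ)) ^ p) * matNorm lam α B :=
        mul_le_mul' (ENNReal.ofReal_le_ofReal hscalar)
          (le_iSup (fun k => ENNReal.ofReal (Real.exp (α * absZ k)) *
            Tnorm lam (fun n => B n (n + k))) k)

theorem homological_equation_estimate_general
    (d : ℕ) (c γ : ℝ) (hγ : 0 < γ)
    (lam : Zd d → ℝ)
    (lamt : Zd d → ℂ)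
    (hdioph : ∀ k : Zd d, k ≠ 0 →
      Tnorm lam (fun n => (lamt (n + k) - lamt n)⁻¹) ≤
        ENNReal.ofReal (12 * c ^ 2 * absZ k ^ (2 * γ)))
    (α δ : ℝ) (hδ : 0 < δ)
    (B : Zd d → Zd d → ℂ) :
    matNorm lam (α - δ)
        (fun n m =>
          (if n = m then (1 : ℂ) else B n m / (lamt m - lamt n)) -
            (if n = m then (1 : ℂ) else 0)) ≤
      ENNReal.ofReal (12 * c ^ 2 * (2 * γ / (Real.exp 1 * δ)) ^ (2 * γ)) *
        matNorm lam α B := by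
  refine matNorm_sub_le_of_Tnorm_diag_le α (by positivity) (by positivity) hδ fun k => ?_
  rcases eq_or_ne k 0 with rfl | hk
  · simp only [add_zero, if_true, sub_self, Tnorm_zero, zero_le]
  · have hoff : ∀ n : Zd d, ¬ n = n + k := fun n h => hk (by simpa using h)
    simp only [hoff, if_false, sub_zero, div_eq_mul_inv]
    exact (Tnorm_mul_le _ _).trans (by rw [mul_comm]; exact mul_le_mul' (hdioph k hk) le_rfl)

theorem homological_equation_estimate
    (d : ℕ) (hd : 1 ≤ d) (c γ : ℝ) (hc : 1 ≤ c) (hγ : 0 < γ)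
    (lam : Zd d → ℝ) (hl0 : ∀ j : Zd d, j ≠ 0 → lam j ≠ lam 0)
    (lamt : Zd d → ℂ)
    (hnet : ∀ (n k : Zd d), k ≠ 0 → lamt (n + k) ≠ lamt n)
    (hdioph : ∀ k : Zd d, k ≠ 0 →
      Tnorm lam (fun n => (lamt (n + k) - lamt n)⁻¹) ≤
        ENNReal.ofReal (12 * c ^ 2 * absZ k ^ (2 * γ)))
    (α δ : ℝ) (hα : 0 < α) (hδ : 0 < δ) (hδα : δ < α)
    (B : Zd d → Zd d → ℂ) (hB : matNorm lam α B ≠ ⊤) :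
    matNorm lam (α - δ)
        (fun n m =>
          (if n = m then (1 : ℂ) else B n m / (lamt m - lamt n)) -
            (if n = m then (1 : ℂ) else 0)) ≤
      ENNReal.ofReal (12 * c ^ 2 * (2 * γ / (Real.exp 1 * δ)) ^ (2 * γ)) *
        matNorm lam α B :=
  homological_equation_estimate_general d c γ hγ lam lamt hdioph α δ hδ B
end
end

section
/- Let d ≥ 1, let h : ℝ → ℝ be continuously differentiable with a := inf_{x ∈ ℝ} |h'(x)| > 0, let ω ∈ ℝ^d with ω·j ≠ 0 for all j ∈ ℤ^d, j ≠ 0, and set λ_n := h(ω·n) for n ∈ ℤ^d. Let (f_k)_{k ∈ ℤ^d} be a family of functions ℝ → ℂ such that each composite f_k ∘ h is continuously differentiable, and suppose that either (i) there is M > 0 such that f_k ≡ 0 whenever |k| > M and ‖f_k ∘ h‖_{C¹} := sup_x |f_k(h(x))| + sup_x |d/dx f_k(h(x))| < ∞ for all k, or (ii) there is α > 0 such that f_k = e^{−α|k|} g_k for a family (g_k) with sup_{k ∈ ℤ^d} ‖g_k ∘ h‖_{C¹} < ∞. Define the matrix V by V_{m,m+k} := f_k(λ_m) for m, k ∈ ℤ^d.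 Then for every k ∈ ℤ^d: sup_{m ∈ ℤ^d} |V_{m,m+k}| + sup_{m ∈ ℤ^d, j ≠ 0} |V_{m+j,m+j+k} − V_{m,m+k}| / |λ_j − λ_0| ≤ (1 + 1/a) ‖f_k ∘ h‖_{C¹}, and consequently there exists α' > 0 with sup_{k ∈ ℤ^d} e^{α'|k|} ( sup_{m} |V_{m,m+k}| + sup_{m, j ≠ 0} |V_{m+j,m+j+k} − V_{m,m+k}| / |λ_j − λ_0| ) < ∞, i.e. V satisfies Assumption (A4) with exponent α'. -/
/-!
The entry `V_{m,m+k} = f_k(λ_m)` is bounded by the sup norm of `G = f_k ∘ h`. For the difference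
quotient, write `λ_m = h(ω·m)`: the numerator is `G(ω·m + ω·j) - G(ω·m)`, at most `‖G'‖_∞ |ω·j|` by
the mean value theorem for `G`, while the mean value theorem for `h` bounds the denominator
`|h(ω·j) - h(0)|` below by `a |ω·j|`, which is nonzero because `ω` is nonresonant. Hence each diagonal
is controlled by `(1 + 1/a) ‖f_k ∘ h‖_{C¹}`, and it remains to see that these `C¹` norms decay
exponentially in `|k|`: in case (i) only finitely many of them are nonzero, in case (ii) the decay
is built in.
-/

noncomputable section

open Real

lemma abs_le_absZ {d : ℕ} (k : Zd d) (i : Fin d) : |(k i : ℝ)| ≤ absZ k :=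
  Finset.single_le_sum (f := fun i => |(k i : ℝ)|) (fun _ _ => abs_nonneg _) (Finset.mem_univ i)

lemma finite_setOf_absZ_le {d : ℕ} (R : ℝ) : {k : Zd d | absZ k ≤ R}.Finite := by
  refine (Set.finite_Icc (fun _ => -⌈R⌉) (fun _ => ⌈R⌉)).subset fun k hk => ?_
  have hki (i : Fin d) : |(k i : ℝ)| ≤ ⌈R⌉ :=
    (abs_le_absZ k i).trans (hk.trans (Int.le_ceil R))
  exact ⟨fun i => by exact_mod_cast (abs_le.mp (hki i)).1,
    fun i => by exact_mod_cast (abs_le.mp (hki i)).2⟩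

lemma sum_mul_intCast_add {d : ℕ} (ω : Fin d → ℝ) (m j : Zd d) :
    ∑ i, ω i * ((m + j) i : ℝ) = ∑ i, ω i * m i + ∑ i, ω i * j i := by
  simp only [Pi.add_apply, Int.cast_add, mul_add, Finset.sum_add_distrib]

lemma mul_abs_sub_le_abs_sub_of_le_abs_deriv {h : ℝ → ℝ} {a : ℝ} (hh : Differentiable ℝ h)
    (ha : ∀ x, a ≤ |deriv h x|) (s t : ℝ) : a * |t - s| ≤ |h t - h s| := by
  wlog hst : s < t generalizing s t
  · rcases (not_lt.mp hst).eq_or_lt with rfl | hts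
    · simp
    · simpa only [abs_sub_comm] using this t s hts
  obtain ⟨c, -, hc⟩ := exists_deriv_eq_slope h hst hh.continuous.continuousOn hh.differentiableOn
  have hslope : h t - h s = deriv h c * (t - s) := by
    rw [hc, div_mul_cancel₀ _ (sub_ne_zero.mpr hst.ne')]
  rw [hslope, abs_mul]
  exact mul_le_mul_of_nonneg_right (ha c) (abs_nonneg _)

section DifferenceQuotient

variable {E : Type*} [NormedAddCommGroup E] [NormedSpace ℝ E] {G : ℝ → E} {h : ℝ → ℝ}
  {a M₁ M₂ : ℝ}

lemma norm_sub_div_abs_sub_le (ha : 0 < a) (hh : Differentiable ℝ h)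
    (h_deriv : ∀ x, a ≤ |deriv h x|) (hG : Differentiable ℝ G) (hM₂ : ∀ x, ‖deriv G x‖ ≤ M₂)
    (x : ℝ) {t : ℝ} (ht : t ≠ 0) : ‖G (x + t) - G x‖ / |h t - h 0| ≤ M₂ / a := by
  have hnum : ‖G (x + t) - G x‖ ≤ M₂ * |t| := by
    simpa using convex_univ.norm_image_sub_le_of_norm_deriv_le (fun y _ => hG y)
      (fun y _ => hM₂ y) (Set.mem_univ x) (Set.mem_univ (x + t))
  have hden : a * |t| ≤ |h t - h 0| := by
    simpa using mul_abs_sub_le_abs_sub_of_le_abs_deriv hh h_deriv 0 t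
  have ht' : 0 < |t| := abs_pos.mpr ht
  calc ‖G (x + t) - G x‖ / |h t - h 0| ≤ M₂ * |t| / (a * |t|) :=
        div_le_div₀ ((norm_nonneg _).trans hnum) hnum (mul_pos ha ht') hden
    _ = M₂ / a := mul_div_mul_right _ _ ht'.ne'

lemma norm_add_norm_sub_div_le (ha : 0 < a) (hh : Differentiable ℝ h)
    (h_deriv : ∀ x, a ≤ |deriv h x|) (hG : Differentiable ℝ G) (hM₁ : ∀ x, ‖G x‖ ≤ M₁)
    (hM₂ : ∀ x, ‖deriv G x‖ ≤ M₂) (y x : ℝ) {t : ℝ} (ht : t ≠ 0) :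
    ‖G y‖ + ‖G (x + t) - G x‖ / |h t - h 0| ≤ (1 + 1 / a) * (M₁ + M₂) := by
  have hM₁0 : 0 ≤ M₁ := (norm_nonneg _).trans (hM₁ 0)
  have hM₂0 : 0 ≤ M₂ := (norm_nonneg _).trans (hM₂ 0)
  calc ‖G y‖ + ‖G (x + t) - G x‖ / |h t - h 0| ≤ M₁ + M₂ / a :=
        add_le_add (hM₁ y) (norm_sub_div_abs_sub_le ha hh h_deriv hG hM₂ x ht)
    _ ≤ (1 + 1 / a) * (M₁ + M₂) := by
        have : 0 ≤ M₁ / a + M₂ := by positivity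
        linarith [show (1 + 1 / a) * (M₁ + M₂) = M₁ + M₂ / a + (M₁ / a + M₂) by ring]

end DifferenceQuotient

lemma lattice_norm_add_norm_sub_div_le {d : ℕ} {ω : Fin d → ℝ} {h : ℝ → ℝ} {F : ℝ → ℂ}
    {a M₁ M₂ : ℝ} (ha : 0 < a) (hh : Differentiable ℝ h) (h_deriv : ∀ x, a ≤ |deriv h x|)
    (hF : Differentiable ℝ fun x => F (h x)) (hM₁ : ∀ x, ‖F (h x)‖ ≤ M₁)
    (hM₂ : ∀ x, ‖deriv (fun x => F (h x)) x‖ ≤ M₂) (m m' : Zd d) {j : Zd d}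
    (hj : ∑ i, ω i * j i ≠ 0) :
    ‖F (h (∑ i, ω i * m i))‖ +
        ‖F (h (∑ i, ω i * (m' + j) i)) - F (h (∑ i, ω i * m' i))‖ /
          |h (∑ i, ω i * j i) - h (∑ i, ω i * (0 : Zd d) i)| ≤
      (1 + 1 / a) * (M₁ + M₂) := by
  rw [sum_mul_intCast_add]
  simpa using norm_add_norm_sub_div_le ha hh h_deriv hF hM₁ hM₂ _ (∑ i, ω i * m' i) hj

def C1BoundedBy (F : ℝ → ℂ) (N : ℝ) : Prop := ∀ x, ‖F x‖ ≤ N ∧ ‖deriv F x‖ ≤ N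

lemma C1BoundedBy.const_mul {F : ℝ → ℂ} {N : ℝ} (hF : C1BoundedBy F N) (c : ℂ) :
    C1BoundedBy (fun x => c * F x) (‖c‖ * N) := fun x => by
  rw [deriv_const_mul_field, norm_mul, norm_mul]
  exact ⟨by gcongr; exact (hF x).1, by gcongr; exact (hF x).2⟩

lemma exists_C1BoundedBy_exp_mul_le_of_eventually_zero {d : ℕ} {F : Zd d → ℝ → ℂ} {R : ℝ}
    (hvanish : ∀ k, R < absZ k → F k = 0) (hbnd : ∀ k, ∃ N, C1BoundedBy (F k) N) :
    ∃ B, ∀ k, ∃ N, C1BoundedBy (F k) N ∧ exp (absZ k) * N ≤ B := by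
  choose N hN using hbnd
  obtain ⟨B, hB⟩ :=
    ((finite_setOf_absZ_le R).image fun k => exp (absZ k) * N k).bddAbove
  refine ⟨max B 0, fun k => ?_⟩
  by_cases hk : absZ k ≤ R
  · exact ⟨N k, hN k, (hB ⟨k, hk, rfl⟩).trans (le_max_left _ _)⟩
  · refine ⟨0, fun x => ?_, by simp⟩
    simp [hvanish k (not_le.mp hk)]

theorem shaped_perturbations_satisfy_A4_general
    (d : ℕ) (a : ℝ) (ha : 0 < a)
    (h : ℝ → ℝ) (hh : ContDiff ℝ 1 h)
    (hglb : IsGLB (Set.range fun x => |deriv h x|) a)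
    (ω : Fin d → ℝ)
    (hω : ∀ j : Zd d, j ≠ 0 → (∑ i, ω i * j i) ≠ 0)
    (f : Zd d → ℝ → ℂ)
    (hf : ∀ k : Zd d, ContDiff ℝ 1 fun x => f k (h x))
    (hcase :
      -- case (i): finitely many nonzero diagonals, each with finite C¹-norm
      (∃ M : ℝ, 0 < M ∧ (∀ k : Zd d, M < absZ k → f k = 0) ∧
        ∀ k : Zd d, ∃ N : ℝ, ∀ x : ℝ,
          ‖f k (h x)‖ ≤ N ∧ ‖deriv (fun x => f k (h x)) x‖ ≤ N) ∨
      -- case (ii): exponentially decaying family with uniformly bounded C¹-norms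
      (∃ α : ℝ, 0 < α ∧ ∃ g : Zd d → ℝ → ℂ,
        (∀ (k : Zd d) (x : ℝ), f k x = Real.exp (-(α * absZ k)) * g k x) ∧
        ∃ N : ℝ, ∀ (k : Zd d) (x : ℝ),
          ‖g k (h x)‖ ≤ N ∧ ‖deriv (fun x => g k (h x)) x‖ ≤ N)) :
    let lam : Zd d → ℝ := fun n => h (∑ i, ω i * n i)
    -- V_{m,m+k} := f_k(λ_m)
    (∀ k : Zd d, ∀ M₁ M₂ : ℝ,
      (∀ x : ℝ, ‖f k (h x)‖ ≤ M₁) →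
      (∀ x : ℝ, ‖deriv (fun x => f k (h x)) x‖ ≤ M₂) →
      ∀ m m' j : Zd d, j ≠ 0 →
        ‖f k (lam m)‖ +
          ‖f k (lam (m' + j)) - f k (lam m')‖ / |lam j - lam 0| ≤
        (1 + 1 / a) * (M₁ + M₂)) ∧
    ∃ α' : ℝ, 0 < α' ∧ ∃ M : ℝ, ∀ k m m' j : Zd d, j ≠ 0 →
      Real.exp (α' * absZ k) *
        (‖f k (lam m)‖ +
          ‖f k (lam (m' + j)) - f k (lam m')‖ / |lam j - lam 0|) ≤ M := by
  intro lam
  have hh' := hh.differentiable one_ne_zero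
  have diagonal : ∀ k M₁ M₂, (∀ x, ‖f k (h x)‖ ≤ M₁) →
      (∀ x, ‖deriv (fun x => f k (h x)) x‖ ≤ M₂) → ∀ m m' j : Zd d, j ≠ 0 →
        ‖f k (lam m)‖ + ‖f k (lam (m' + j)) - f k (lam m')‖ / |lam j - lam 0| ≤
          (1 + 1 / a) * (M₁ + M₂) := fun k M₁ M₂ hM₁ hM₂ m m' j hj =>
    lattice_norm_add_norm_sub_div_le ha (hh.differentiable one_ne_zero)
      (fun x => hglb.1 ⟨x, rfl⟩) ((hf k).differentiable one_ne_zero) hM₁ hM₂ m m' (hω j hj)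
  refine ⟨diagonal, ?_⟩
  obtain ⟨α', hα', B, hB⟩ : ∃ α' > 0, ∃ B, ∀ k, ∃ N,
      C1BoundedBy (fun x => f k (h x)) N ∧ exp (α' * absZ k) * N ≤ B := by
    rcases hcase with ⟨R, -, hvanish, hbnd⟩ | ⟨α, hα, g, hfg, N, hN⟩
    · refine ⟨1, one_pos, ?_⟩
      simpa using exists_C1BoundedBy_exp_mul_le_of_eventually_zero (F := fun k x => f k (h x))
        (R := R) (fun k hk => by rw [hvanish k hk]; rfl) hbnd
    · refine ⟨α, hα, N, fun k => ⟨‖(exp (-(α * absZ k)) : ℂ)‖ * N, ?_, le_of_eq ?_⟩⟩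
      · simpa only [hfg] using C1BoundedBy.const_mul (hN k) _
      rw [Complex.norm_real, norm_of_nonneg (exp_pos _).le, ← mul_assoc, ← exp_add]
      simp
  refine ⟨α', hα', (1 + 1 / a) * (B + B), fun k m m' j hj => ?_⟩
  obtain ⟨N, hN, hNB⟩ := hB k
  calc exp (α' * absZ k) * (‖f k (lam m)‖ + ‖f k (lam (m' + j)) - f k (lam m')‖ / |lam j - lam 0|)
      ≤ exp (α' * absZ k) * ((1 + 1 / a) * (N + N)) := by
        gcongr
        exact diagonal k N N (fun x => (hN x).1) (fun x => (hN x).2) m m' j hj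
    _ = (1 + 1 / a) * (exp (α' * absZ k) * N + exp (α' * absZ k) * N) := by ring
    _ ≤ (1 + 1 / a) * (B + B) := by gcongr

theorem shaped_perturbations_satisfy_A4
    (d : ℕ) (hd : 1 ≤ d) (a : ℝ) (ha : 0 < a)
    (h : ℝ → ℝ) (hh : ContDiff ℝ 1 h)
    (hglb : IsGLB (Set.range fun x => |deriv h x|) a)
    (ω : Fin d → ℝ)
    (hω : ∀ j : Zd d, j ≠ 0 → (∑ i, ω i * j i) ≠ 0)
    (f : Zd d → ℝ → ℂ)
    (hf : ∀ k : Zd d, ContDiff ℝ 1 fun x => f k (h x))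
    (hcase :
      -- case (i): finitely many nonzero diagonals, each with finite C¹-norm
      (∃ M : ℝ, 0 < M ∧ (∀ k : Zd d, M < absZ k → f k = 0) ∧
        ∀ k : Zd d, ∃ N : ℝ, ∀ x : ℝ,
          ‖f k (h x)‖ ≤ N ∧ ‖deriv (fun x => f k (h x)) x‖ ≤ N) ∨
      -- case (ii): exponentially decaying family with uniformly bounded C¹-norms
      (∃ α : ℝ, 0 < α ∧ ∃ g : Zd d → ℝ → ℂ,
        (∀ (k : Zd d) (x : ℝ), f k x = Real.exp (-(α * absZ k)) * g k x) ∧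
        ∃ N : ℝ, ∀ (k : Zd d) (x : ℝ),
          ‖g k (h x)‖ ≤ N ∧ ‖deriv (fun x => g k (h x)) x‖ ≤ N)) :
    let lam : Zd d → ℝ := fun n => h (∑ i, ω i * n i)
    -- V_{m,m+k} := f_k(λ_m)
    (∀ k : Zd d, ∀ M₁ M₂ : ℝ,
      (∀ x : ℝ, ‖f k (h x)‖ ≤ M₁) →
      (∀ x : ℝ, ‖deriv (fun x => f k (h x)) x‖ ≤ M₂) →
      ∀ m m' j : Zd d, j ≠ 0 →
        ‖f k (lam m)‖ +
          ‖f k (lam (m' + j)) - f k (lam m')‖ / |lam j - lam 0| ≤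
        (1 + 1 / a) * (M₁ + M₂)) ∧
    ∃ α' : ℝ, 0 < α' ∧ ∃ M : ℝ, ∀ k m m' j : Zd d, j ≠ 0 →
      Real.exp (α' * absZ k) *
        (‖f k (lam m)‖ +
          ‖f k (lam (m' + j)) - f k (lam m')‖ / |lam j - lam 0|) ≤ M :=
  shaped_perturbations_satisfy_A4_general d a ha h hh hglb ω hω f hf hcase
end
end
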